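/- arXiv:1207.3518 — 2 statements merged into one kernel-verified Lean document; each statement's English description precedes it below -/
import Mathlib

section
/- Let G and G' be locally finite graphs on the same countable vertex set V whose edge relations differ on only finitely many pairs of vertices. Then their adjacency operators have the same deficiency indices: η₊(A_G) = η₊(A_{G'}) and η₋(A_G) = η₋(A_{G'}). -/
noncomputable section

open scoped ComplexConjugate

namespace DefIdx

/-- The Hilbert space `ℓ²(V)` of square-summable complex functions on `V`. -/
abbrev L2 (V : Type*) := lp (fun _ : V => ℂ) 2

lemma memℓp_of_finite {V : Type*} {f : V → ℂ} (h : {x | f x ≠ 0}.Finite) :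
    Memℓp f 2 :=
  (memℓp_zero h).of_exponent_ge zero_le

/-- The subspace `C_c(V)` of finitely supported elements of `ℓ²(V)`. -/
def Cc (V : Type*) : Submodule ℂ (L2 V) where
  carrier := {f | {x | (f : ∀ _ : V, ℂ) x ≠ 0}.Finite}
  zero_mem' := by
    simp only [Set.mem_setOf_eq, lp.coeFn_zero, Pi.zero_apply, ne_eq, not_true_eq_false]
    simp
  add_mem' := by
    intro f g hf hg
    refine (hf.union hg).subset ?_
    intro x hx
    simp only [Set.mem_setOf_eq, lp.coeFn_add, Pi.add_apply] at hx ⊢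
    by_contra hc
    try push_neg at hc
    simp only [Set.mem_union, Set.mem_setOf_eq, not_or, not_not] at hc
    simp [hc.1, hc.2] at hx
  smul_mem' := by
    intro c f hf
    refine hf.subset ?_
    intro x hx
    simp only [Set.mem_setOf_eq, lp.coeFn_smul, Pi.smul_apply, smul_eq_mul] at hx ⊢
    intro h0
    simp [h0] at hx

section Adjacency

variable {V : Type*}

/-- The pointwise action of the adjacency matrix of a locally finite graph. -/
def adjA (G : SimpleGraph V) (hG : G.LocallyFinite) (f : V → ℂ) (x : V) : ℂ :=
  ∑ y ∈ @SimpleGraph.neighborFinset V G x (hG x), f y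

lemma adjA_support (G : SimpleGraph V) (hG : G.LocallyFinite) {f : V → ℂ}
    (hf : {x | f x ≠ 0}.Finite) : {x | adjA G hG f x ≠ 0}.Finite := by
  have hsub : {x | adjA G hG f x ≠ 0} ⊆ ⋃ y ∈ {x | f x ≠ 0}, (G.neighborSet y) := by
    intro x hx
    obtain ⟨y, hy, hfy⟩ := Finset.exists_ne_zero_of_sum_ne_zero hx
    have hadj : G.Adj x y := by
      have := @SimpleGraph.mem_neighborFinset V G x (hG x) y
      exact this.mp hy
    exact Set.mem_biUnion hfy (SimpleGraph.mem_neighborSet G y x |>.mpr hadj.symm)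
  exact (hf.biUnion fun y _ => by haveI := hG y; exact (G.neighborSet y).toFinite).subset hsub

/-- The adjacency operator of a locally finite graph, as a densely defined operator
on `ℓ²(V)` with domain the finitely supported functions. -/
def adjOp (G : SimpleGraph V) (hG : G.LocallyFinite) : L2 V →ₗ.[ℂ] L2 V where
  domain := Cc V
  toFun :=
    { toFun := fun f => ⟨adjA G hG f, memℓp_of_finite (adjA_support G hG f.2)⟩
      map_add' := by
        intro f g
        apply lp.ext
        funext x
        simp only [lp.coeFn_add, Pi.add_apply]
        show adjA G hG (((f : L2 V) + (g : L2 V) : L2 V)) x = _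
        simp only [adjA, lp.coeFn_add, Pi.add_apply]
        exact Finset.sum_add_distrib
      map_smul' := by
        intro c f
        apply lp.ext
        funext x
        simp only [RingHom.id_apply, lp.coeFn_smul, Pi.smul_apply, smul_eq_mul]
        show adjA G hG ((c • (f : L2 V) : L2 V)) x = _
        simp only [adjA, lp.coeFn_smul, Pi.smul_apply, smul_eq_mul]
        exact (Finset.mul_sum _ _ _).symm }

/-- The pointwise action of the combinatorial (physical) Laplacian. -/
def lapA (G : SimpleGraph V) (hG : G.LocallyFinite) (f : V → ℂ) (x : V) : ℂ :=
  ∑ y ∈ @SimpleGraph.neighborFinset V G x (hG x), (f x - f y)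

lemma lapA_support (G : SimpleGraph V) (hG : G.LocallyFinite) {f : V → ℂ}
    (hf : {x | f x ≠ 0}.Finite) : {x | lapA G hG f x ≠ 0}.Finite := by
  have hsub : {x | lapA G hG f x ≠ 0} ⊆
      {x | f x ≠ 0} ∪ ⋃ y ∈ {x | f x ≠ 0}, (G.neighborSet y) := by
    intro x hx
    by_contra hc
    simp only [Set.mem_union, Set.mem_setOf_eq, not_or, not_not] at hc
    obtain ⟨hfx, hmem⟩ := hc
    apply hx
    show lapA G hG f x = 0
    unfold lapA
    refine Finset.sum_eq_zero fun y hy => ?_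
    have hadj : G.Adj x y := (@SimpleGraph.mem_neighborFinset V G x (hG x) y).mp hy
    have hfy : f y = 0 := by
      by_contra hfy
      exact hmem (Set.mem_biUnion hfy ((SimpleGraph.mem_neighborSet G y x).mpr hadj.symm))
    rw [hfx, hfy, sub_zero]
  refine Set.Finite.subset ?_ hsub
  exact hf.union (hf.biUnion fun y _ => by haveI := hG y; exact (G.neighborSet y).toFinite)

/-- The combinatorial (physical) Laplacian of a locally finite graph, as a densely
defined operator on `ℓ²(V)` with domain the finitely supported functions. -/
def lapOp (G : SimpleGraph V) (hG : G.LocallyFinite) : L2 V →ₗ.[ℂ] L2 V where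
  domain := Cc V
  toFun :=
    { toFun := fun f => ⟨lapA G hG f, memℓp_of_finite (lapA_support G hG f.2)⟩
      map_add' := by
        intro f g
        apply lp.ext
        funext x
        simp only [lp.coeFn_add, Pi.add_apply]
        show lapA G hG (((f : L2 V) + (g : L2 V) : L2 V)) x = _
        simp only [lapA, lp.coeFn_add, Pi.add_apply]
        rw [← Finset.sum_add_distrib]
        exact Finset.sum_congr rfl fun y _ => by ring
      map_smul' := by
        intro c f
        apply lp.ext
        funext x
        simp only [RingHom.id_apply, lp.coeFn_smul, Pi.smul_apply, smul_eq_mul]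
        show lapA G hG ((c • (f : L2 V) : L2 V)) x = _
        simp only [lapA, lp.coeFn_smul, Pi.smul_apply, smul_eq_mul]
        rw [Finset.mul_sum]
        exact Finset.sum_congr rfl fun y _ => by ring }

end Adjacency

section Jacobi

/-- The pointwise action of the Jacobi matrix with off-diagonal entries `a n` and
diagonal entries `b n` (with the convention `a (-1) = 0`). -/
def jacA (a b : ℕ → ℝ) (f : ℕ → ℂ) (n : ℕ) : ℂ :=
  (if n = 0 then 0 else (a (n - 1) : ℂ) * f (n - 1)) + (b n : ℂ) * f n + (a n : ℂ) * f (n + 1)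

lemma jacA_support (a b : ℕ → ℝ) {f : ℕ → ℂ} (hf : {n | f n ≠ 0}.Finite) :
    {n | jacA a b f n ≠ 0}.Finite := by
  have hsub : {n | jacA a b f n ≠ 0} ⊆
      (fun m => m + 1) '' {n | f n ≠ 0} ∪ {n | f n ≠ 0} ∪ (fun m => m - 1) '' {n | f n ≠ 0} := by
    intro n hn
    by_contra hc
    simp only [Set.mem_union, not_or] at hc
    apply hn
    show jacA a b f n = 0
    have h1 : f n = 0 := by
      by_contra h; exact hc.1.2 h
    have h3 : f (n + 1) = 0 := by
      by_contra h
      exact hc.2 ⟨n + 1, h, by show n + 1 - 1 = n; omega⟩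
    rcases Nat.eq_zero_or_pos n with h0 | h0
    · subst h0; simp [jacA, h1, h3]
    · have h2 : f (n - 1) = 0 := by
        by_contra h
        exact hc.1.1 ⟨n - 1, h, by show n - 1 + 1 = n; omega⟩
      simp [jacA, h1, h2, h3]
  refine Set.Finite.subset ?_ hsub
  exact ((hf.image _).union hf).union (hf.image _)

/-- The Jacobi matrix with off-diagonal entries `a n > 0` and diagonal entries `b n`,
as a densely defined operator on `ℓ²(ℕ)` with domain the finitely supported sequences. -/
def jacOp (a b : ℕ → ℝ) : L2 ℕ →ₗ.[ℂ] L2 ℕ where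
  domain := Cc ℕ
  toFun :=
    { toFun := fun f => ⟨jacA a b f, memℓp_of_finite (jacA_support a b f.2)⟩
      map_add' := by
        intro f g
        apply lp.ext
        funext n
        simp only [lp.coeFn_add, Pi.add_apply]
        show jacA a b (((f : L2 ℕ) + (g : L2 ℕ) : L2 ℕ)) n = _
        simp only [jacA, lp.coeFn_add, Pi.add_apply]
        split <;> ring
      map_smul' := by
        intro c f
        apply lp.ext
        funext n
        simp only [RingHom.id_apply, lp.coeFn_smul, Pi.smul_apply, smul_eq_mul]
        show jacA a b ((c • (f : L2 ℕ) : L2 ℕ)) n = _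
        simp only [jacA, lp.coeFn_smul, Pi.smul_apply, smul_eq_mul]
        split <;> ring }

end Jacobi

section Eta

variable {H : Type*} [NormedAddCommGroup H] [InnerProductSpace ℂ H] [CompleteSpace H]

/-- The deficiency subspace `ker (T* - z)` of a (partially defined) operator. -/
def defSubspace (T : H →ₗ.[ℂ] H) (z : ℂ) : Submodule ℂ T.adjoint.domain :=
  LinearMap.ker (T.adjoint.toFun - z • T.adjoint.domain.subtype)

/-- The deficiency index `η₊(T) = dim ker (T* - i)`. -/
def etaP (T : H →ₗ.[ℂ] H) : Cardinal := Module.rank ℂ (defSubspace T Complex.I)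

/-- The deficiency index `η₋(T) = dim ker (T* + i)`. -/
def etaM (T : H →ₗ.[ℂ] H) : Cardinal := Module.rank ℂ (defSubspace T (-Complex.I))

/-- A partially defined operator is symmetric if `⟪T f, g⟫ = ⟪f, T g⟫` on its domain. -/
def IsSymm (T : H →ₗ.[ℂ] H) : Prop :=
  ∀ f g : T.domain, (inner ℂ (T f) (g : H) : ℂ) = inner ℂ (f : H) (T g)

/-- A densely defined operator is essentially self-adjoint if its closure is self-adjoint. -/
def EssSelfAdj (T : H →ₗ.[ℂ] H) : Prop :=
  T.closure.adjoint = T.closure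

/-- The restriction of the sum of two partially defined operators to the domain
of the first one, assuming domain inclusion. -/
def sumRestrict (S T : H →ₗ.[ℂ] H) (h : S.domain ≤ T.domain) : H →ₗ.[ℂ] H :=
  ⟨S.domain, S.toFun + T.toFun.comp (Submodule.inclusion h)⟩

/-- The sum of a partially defined operator and a bounded operator, with the
domain of the former. -/
def addBdd (S : H →ₗ.[ℂ] H) (B : H →L[ℂ] H) : H →ₗ.[ℂ] H :=
  ⟨S.domain, S.toFun + (B : H →ₗ[ℂ] H).comp S.domain.subtype⟩

end Eta

section Graphs

variable {V : Type*}

/-- The sphere of radius `n` around the vertex `v` (w.r.t. the graph metric). -/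
def sphere (G : SimpleGraph V) (v : V) (n : ℕ) : Set V := {w | G.dist v w = n}

/-- A connected graph is an antitree with root `v` if every vertex `w ≠ v` at distance
`n ≥ 1` from `v` has exactly `S_{n-1}(v) ∪ S_{n+1}(v)` as its set of neighbours. -/
def IsAntitree (G : SimpleGraph V) (v : V) : Prop :=
  G.Connected ∧ ∀ w, w ≠ v →
    G.neighborSet w = sphere G v (G.dist v w - 1) ∪ sphere G v (G.dist v w + 1)

/-- A function is radially symmetric (w.r.t. the root `v`) if it is constant on
each sphere around `v`. -/
def RadSymm (G : SimpleGraph V) (v : V) (f : V → ℂ) : Prop :=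
  ∀ x y, G.dist v x = G.dist v y → f x = f y

/-- The average of `f` over the sphere of radius `n` around `v`. -/
def sphAvg (G : SimpleGraph V) (v : V) (hfin : ∀ n, (sphere G v n).Finite)
    (f : V → ℂ) (n : ℕ) : ℂ :=
  (1 / ((sphere G v n).ncard : ℂ)) * ∑ y ∈ (hfin n).toFinset, f y

/-- The sphere-averaging map `P`. -/
def sphP (G : SimpleGraph V) (v : V) (hfin : ∀ n, (sphere G v n).Finite)
    (f : V → ℂ) (x : V) : ℂ :=
  sphAvg G v hfin f (G.dist v x)

/-- The disjoint union of `n` copies of a graph. -/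
def copies (G : SimpleGraph V) (n : ℕ) : SimpleGraph (Fin n × V) where
  Adj p q := p.1 = q.1 ∧ G.Adj p.2 q.2
  symm := ⟨fun p q h => ⟨h.1.symm, h.2.symm⟩⟩
  loopless := ⟨fun q h => G.loopless.irrefl q.2 h.2⟩

/-- The disjoint union of copies of a locally finite graph is locally finite. -/
def copiesLF (G : SimpleGraph V) (hG : G.LocallyFinite) (n : ℕ) :
    (copies G n).LocallyFinite := fun p =>
  Set.Finite.fintype (by
    haveI := hG p.2
    have hsub : (copies G n).neighborSet p ⊆ (fun w => (p.1, w)) '' (G.neighborSet p.2) := by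
      rintro ⟨i, w⟩ ⟨h1, h2⟩
      exact ⟨w, h2, by simp [h1]⟩
    exact ((G.neighborSet p.2).toFinite.image _).subset hsub)

end Graphs

/-!
The deficiency index `dim ker (T* - z)` is `dim (range (T - conj z))ᗮ`. For symmetric `S` one has
`|Im w| ‖f‖ ≤ ‖(S - w) f‖`, and whenever `‖(S - S') f‖ ≤ k ‖S' f‖` with `k < 1`, orthogonal
projection embeds `(range S)ᗮ` into `(range S')ᗮ`. Hence `dim (range (S - w))ᗮ` is locally
constant along vertical rays, and it is unchanged by a perturbation of norm at most `b` as soon as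
`|Im w| > b`; moving `w` far enough up its ray gives stability under bounded perturbations.
Changing finitely many edges perturbs the adjacency operator by at most the number of changed
pairs in operator norm.
-/

section Orthogonal

variable {𝕜 E : Type*} [RCLike 𝕜] [NormedAddCommGroup E] [InnerProductSpace 𝕜 E]

lemma rank_le_rank_of_disjoint_orthogonal {K L : Submodule 𝕜 E} [L.HasOrthogonalProjection]
    (h : Disjoint K Lᗮ) : Module.rank 𝕜 K ≤ Module.rank 𝕜 L := by
  refine LinearMap.rank_le_of_injective (L.orthogonalProjectionOnto.toLinearMap ∘ₗ K.subtype) ?_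
  rw [← LinearMap.ker_eq_bot, LinearMap.ker_eq_bot']
  intro v hv
  have hv' : (v : E) ∈ Lᗮ := Submodule.orthogonalProjectionOnto_eq_zero_iff.mp hv
  exact Subtype.ext (Submodule.disjoint_def.mp h v v.2 hv')

end Orthogonal

section Deficiency

open scoped InnerProductSpace
open Complex (I re_add_im)

variable {H : Type*} [NormedAddCommGroup H] [InnerProductSpace ℂ H] {D : Submodule ℂ H}

lemma rank_orthogonal_range_le [CompleteSpace H] {S S' : D →ₗ[ℂ] H} {k : ℝ} (hk : k < 1)
    (h : ∀ f, ‖S f - S' f‖ ≤ k * ‖S' f‖) :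
    Module.rank ℂ (LinearMap.range S)ᗮ ≤ Module.rank ℂ (LinearMap.range S')ᗮ := by
  refine rank_le_rank_of_disjoint_orthogonal ?_
  rw [Submodule.orthogonal_orthogonal_eq_closure, Submodule.disjoint_def]
  intro v hv hv'
  -- `⟪v, S' f⟫ = ⟪v, S' f - S f⟫` is small, and this passes to the closure of `range S'`.
  have hsmall : ∀ u ∈ (LinearMap.range S').topologicalClosure, ‖⟪v, u⟫_ℂ‖ ≤ k * ‖v‖ * ‖u‖ := by
    intro u hu
    rw [← SetLike.mem_coe, Submodule.topologicalClosure_coe] at hu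
    refine closure_minimal (t := {u | ‖⟪v, u⟫_ℂ‖ ≤ k * ‖v‖ * ‖u‖}) ?_
      (isClosed_le (continuous_const.inner continuous_id).norm
        (continuous_const.mul continuous_norm)) hu
    rintro _ ⟨f, rfl⟩
    have hSf : ⟪v, S f⟫_ℂ = 0 :=
      Submodule.inner_left_of_mem_orthogonal (LinearMap.mem_range_self S f) hv
    calc ‖⟪v, S' f⟫_ℂ‖ = ‖⟪v, S' f - S f⟫_ℂ‖ := by rw [inner_sub_right, hSf, sub_zero]
      _ ≤ ‖v‖ * ‖S' f - S f‖ := norm_inner_le_norm _ _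
      _ ≤ ‖v‖ * (k * ‖S' f‖) := by rw [norm_sub_rev]; gcongr; exact h f
      _ = k * ‖v‖ * ‖S' f‖ := by ring
  have hv2 := hsmall v hv'
  rw [inner_self_eq_norm_sq_to_K, norm_pow, RCLike.norm_ofReal, abs_norm] at hv2
  by_contra hv0
  have hpos : 0 < ‖v‖ := norm_pos_iff.mpr hv0
  nlinarith [mul_pos (sub_pos.mpr hk) (mul_pos hpos hpos)]

lemma abs_im_mul_norm_le_norm_sub_smul {S : D →ₗ[ℂ] H} (hS : IsSymm (⟨D, S⟩ : H →ₗ.[ℂ] H))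
    (w : ℂ) (f : D) : |w.im| * ‖f‖ ≤ ‖S f - w • (f : H)‖ := by
  have him : (⟪(f : H), S f⟫_ℂ).im = 0 := by
    rw [← Complex.conj_eq_iff_im, inner_conj_symm]
    exact hS f f
  have hkey : |w.im| * ‖f‖ ^ 2 ≤ ‖f‖ * ‖S f - w • (f : H)‖ := by
    calc |w.im| * ‖f‖ ^ 2 = |(⟪(f : H), S f - w • (f : H)⟫_ℂ).im| := by
          rw [inner_sub_right, inner_smul_right, inner_self_eq_norm_sq_to_K]
          simp [him, ← Complex.ofReal_pow, abs_mul, Submodule.coe_norm]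
      _ ≤ ‖⟪(f : H), S f - w • (f : H)⟫_ℂ‖ := Complex.abs_im_le_norm _
      _ ≤ ‖f‖ * ‖S f - w • (f : H)‖ := norm_inner_le_norm _ _
  rcases (norm_nonneg f).eq_or_lt with hf | hf
  · rw [← hf, mul_zero]; exact norm_nonneg _
  · nlinarith

def defectRank (S : D →ₗ[ℂ] H) (w : ℂ) : Cardinal :=
  Module.rank ℂ (LinearMap.range (S - w • D.subtype))ᗮ

lemma defectRank_le_of_norm_sub_le [CompleteSpace H] {S S' : D →ₗ[ℂ] H}
    (hS' : IsSymm (⟨D, S'⟩ : H →ₗ.[ℂ] H)) {w w' : ℂ} {b : ℝ} (hb : 0 ≤ b) (hbw : b < |w'.im|)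
    (h : ∀ f : D, ‖(S f - w • (f : H)) - (S' f - w' • (f : H))‖ ≤ b * ‖f‖) :
    defectRank S w ≤ defectRank S' w' := by
  have hw' : 0 < |w'.im| := hb.trans_lt hbw
  refine rank_orthogonal_range_le (k := b / |w'.im|) ((div_lt_one hw').mpr hbw) fun f => ?_
  calc ‖(S f - w • (f : H)) - (S' f - w' • (f : H))‖ ≤ b * ‖f‖ := h f
    _ = b / |w'.im| * (|w'.im| * ‖f‖) := by field_simp
    _ ≤ b / |w'.im| * ‖S' f - w' • (f : H)‖ := by
      gcongr; exact abs_im_mul_norm_le_norm_sub_smul hS' w' f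

lemma defectRank_eq_of_norm_sub_lt_abs_im [CompleteSpace H] {S : D →ₗ[ℂ] H}
    (hS : IsSymm (⟨D, S⟩ : H →ₗ.[ℂ] H)) {w w' : ℂ} (h : ‖w - w'‖ < |w.im|)
    (h' : ‖w - w'‖ < |w'.im|) : defectRank S w = defectRank S w' := by
  have hdiff (a b : ℂ) (f : D) :
      ‖(S f - a • (f : H)) - (S f - b • (f : H))‖ = ‖a - b‖ * ‖f‖ := by
    rw [sub_sub_sub_cancel_left, ← sub_smul, norm_smul, norm_sub_rev]; rfl
  rw [norm_sub_rev] at h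
  exact le_antisymm
    (defectRank_le_of_norm_sub_le hS (norm_nonneg _) h' fun f => (hdiff w w' f).le)
    (defectRank_le_of_norm_sub_le hS (norm_nonneg _) h fun f => (hdiff w' w f).le)

lemma defectRank_eq_of_norm_sub_le_of_lt_abs_im [CompleteSpace H] {S S' : D →ₗ[ℂ] H}
    (hS : IsSymm (⟨D, S⟩ : H →ₗ.[ℂ] H)) (hS' : IsSymm (⟨D, S'⟩ : H →ₗ.[ℂ] H)) {b : ℝ}
    (hb : 0 ≤ b) (h : ∀ f : D, ‖S f - S' f‖ ≤ b * ‖f‖) {w : ℂ} (hbw : b < |w.im|) :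
    defectRank S w = defectRank S' w := by
  have hdiff (T T' : D →ₗ[ℂ] H) (f : D) :
      (T f - w • (f : H)) - (T' f - w • (f : H)) = T f - T' f := by abel
  exact le_antisymm
    (defectRank_le_of_norm_sub_le hS' hb hbw fun f => by rw [hdiff]; exact h f)
    (defectRank_le_of_norm_sub_le hS hb hbw fun f => by rw [hdiff, norm_sub_rev]; exact h f)

lemma isLocallyConstant_defectRank_exp [CompleteSpace H] {S : D →ₗ[ℂ] H}
    (hS : IsSymm (⟨D, S⟩ : H →ₗ.[ℂ] H)) {z : ℂ} (hz : z.im ≠ 0) :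
    IsLocallyConstant fun t : ℝ => defectRank S (z.re + Real.exp t * z.im * I) := by
  rw [IsLocallyConstant.iff_eventually_eq]
  intro t
  have hexp := Real.exp_pos t
  have hnhds : Set.Ioo (Real.exp t / 2) (2 * Real.exp t) ∈ nhds (Real.exp t) :=
    Ioo_mem_nhds (by linarith) (by linarith)
  filter_upwards [Real.continuous_exp.continuousAt.preimage_mem_nhds hnhds] with s ⟨hs₁, hs₂⟩
  have hy : 0 < |z.im| := abs_pos.mpr hz
  have him : ∀ r : ℝ, |((z.re : ℂ) + r * z.im * I).im| = |r| * |z.im| := fun r => by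
    simp [abs_mul]
  have hnorm : ‖((z.re : ℂ) + Real.exp s * z.im * I) - (z.re + Real.exp t * z.im * I)‖
      = |Real.exp s - Real.exp t| * |z.im| := by
    rw [add_sub_add_left_eq_sub, ← sub_mul, ← sub_mul, norm_mul, Complex.norm_I, mul_one,
      norm_mul, ← Complex.ofReal_sub, Complex.norm_real, Complex.norm_real, Real.norm_eq_abs,
      Real.norm_eq_abs]
  apply defectRank_eq_of_norm_sub_lt_abs_im hS <;>
    rw [hnorm, him, abs_of_pos (Real.exp_pos _)] <;>
    exact mul_lt_mul_of_pos_right (abs_sub_lt_iff.mpr ⟨by linarith, by linarith⟩) hy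

lemma defectRank_re_add_mul_im [CompleteSpace H] {S : D →ₗ[ℂ] H}
    (hS : IsSymm (⟨D, S⟩ : H →ₗ.[ℂ] H)) {z : ℂ} (hz : z.im ≠ 0) {r : ℝ} (hr : 0 < r) :
    defectRank S (z.re + r * z.im * I) = defectRank S z := by
  simpa [Real.exp_log hr, re_add_im] using
    (isLocallyConstant_defectRank_exp hS hz).apply_eq_of_preconnectedSpace (Real.log r) 0

lemma defectRank_eq_of_norm_sub_le [CompleteSpace H] {S S' : D →ₗ[ℂ] H}
    (hS : IsSymm (⟨D, S⟩ : H →ₗ.[ℂ] H)) (hS' : IsSymm (⟨D, S'⟩ : H →ₗ.[ℂ] H)) {b : ℝ}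
    (hb : 0 ≤ b) (h : ∀ f : D, ‖S f - S' f‖ ≤ b * ‖f‖) {z : ℂ} (hz : z.im ≠ 0) :
    defectRank S z = defectRank S' z := by
  have hy : 0 < |z.im| := abs_pos.mpr hz
  have hr : 0 < (b + 1) / |z.im| := by positivity
  have him : b < |((z.re : ℂ) + ((b + 1) / |z.im| : ℝ) * z.im * I).im| := by
    simp [abs_mul, abs_of_pos hr, hy.ne']
  calc defectRank S z = defectRank S (z.re + ((b + 1) / |z.im| : ℝ) * z.im * I) :=
        (defectRank_re_add_mul_im hS hz hr).symm
    _ = defectRank S' (z.re + ((b + 1) / |z.im| : ℝ) * z.im * I) :=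
        defectRank_eq_of_norm_sub_le_of_lt_abs_im hS hS' hb h him
    _ = defectRank S' z := defectRank_re_add_mul_im hS' hz hr

lemma mem_orthogonal_range_sub_smul_iff (T : H →ₗ.[ℂ] H) (z : ℂ) (v : H) :
    v ∈ (LinearMap.range (T.toFun - conj z • T.domain.subtype))ᗮ ↔
      ∀ x : T.domain, ⟪z • v, (x : H)⟫_ℂ = ⟪v, T x⟫_ℂ := by
  simp only [Submodule.mem_orthogonal', LinearMap.mem_range, forall_exists_index,
    forall_apply_eq_imp_iff, LinearMap.sub_apply, LinearMap.smul_apply, Submodule.subtype_apply,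
    inner_sub_right, inner_smul_right, inner_smul_left, sub_eq_zero]
  exact forall_congr' fun x => eq_comm

lemma rank_defSubspace [CompleteSpace H] (T : H →ₗ.[ℂ] H) (hT : Dense (T.domain : Set H))
    (z : ℂ) : Module.rank ℂ (defSubspace T z) = defectRank T.toFun (conj z) := by
  let ι : defSubspace T z →ₗ[ℂ] H := T.adjoint.domain.subtype ∘ₗ (defSubspace T z).subtype
  have hι : Function.Injective ι := Subtype.val_injective.comp Subtype.val_injective
  have hmem : ∀ g : T.adjoint.domain, g ∈ defSubspace T z ↔ T.adjoint g = z • (g : H) := by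
    intro g
    rw [defSubspace, LinearMap.mem_ker, LinearMap.sub_apply, LinearMap.smul_apply, sub_eq_zero]
    rfl
  have hrange : LinearMap.range ι = (LinearMap.range (T.toFun - conj z • T.domain.subtype))ᗮ := by
    ext v
    rw [mem_orthogonal_range_sub_smul_iff]
    constructor
    · rintro ⟨⟨g, hg⟩, rfl⟩ x
      change ⟪z • (g : H), (x : H)⟫_ℂ = ⟪(g : H), T x⟫_ℂ
      rw [← (hmem g).mp hg]
      exact LinearPMap.adjoint_isFormalAdjoint hT g x
    · intro hv
      have hdom := LinearPMap.mem_adjoint_domain_of_exists v ⟨z • v, hv⟩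
      exact ⟨⟨⟨v, hdom⟩, (hmem _).mpr (LinearPMap.adjoint_apply_eq hT ⟨v, hdom⟩ hv)⟩, rfl⟩
  rw [← rank_range_of_injective ι hι, hrange]
  rfl

end Deficiency

section AdjacencyOperator

open scoped InnerProductSpace

variable {V : Type*}

lemma dense_Cc : Dense (Cc V : Set (L2 V)) := by
  classical
  intro f
  refine mem_closure_of_tendsto (lp.hasSum_single (by norm_num) f)
    (Filter.Eventually.of_forall fun s => s.finite_toSet.subset fun x hx => ?_)
  by_contra hxs
  refine hx ?_
  rw [lp.coeFn_sum, Finset.sum_apply]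
  exact Finset.sum_eq_zero fun i hi => lp.single_apply_ne 2 i _ fun h => hxs (h ▸ hi)

lemma inner_eq_sum_of_forall_notMem (f g : L2 V) (W : Finset V)
    (h : ∀ x ∉ W, f x = 0 ∨ g x = 0) : ⟪f, g⟫_ℂ = ∑ x ∈ W, conj (f x) * g x := by
  rw [lp.inner_eq_tsum]
  simp only [RCLike.inner_apply']
  refine tsum_eq_sum fun x hx => ?_
  rcases h x hx with h | h <;> simp [h]

lemma adjA_eq_sum_ite (G : SimpleGraph V) [DecidableRel G.Adj] (hG : G.LocallyFinite)
    (f : V → ℂ) (x : V) {W : Finset V} (hW : ∀ y ∉ W, G.Adj x y → f y = 0) :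
    adjA G hG f x = ∑ y ∈ W, if G.Adj x y then f y else 0 := by
  rw [← Finset.sum_filter, adjA]
  refine (Finset.sum_subset (fun y hy => ?_) fun y hy hyW => ?_).symm
  · exact (@SimpleGraph.mem_neighborFinset V G x (hG x) y).mpr (Finset.mem_filter.mp hy).2
  · have hxy := (@SimpleGraph.mem_neighborFinset V G x (hG x) y).mp hy
    exact hW y (fun hy => hyW (Finset.mem_filter.mpr ⟨hy, hxy⟩)) hxy

lemma adjOp_isSymm (G : SimpleGraph V) (hG : G.LocallyFinite) : IsSymm (adjOp G hG) := by
  classical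
  intro f g
  have hf : {x | (f : L2 V) x ≠ 0}.Finite := f.2
  have hg : {x | (g : L2 V) x ≠ 0}.Finite := g.2
  set W := hf.toFinset ∪ hg.toFinset
  have hfW : ∀ x ∉ W, (f : L2 V) x = 0 := fun x hx => by
    by_contra h; exact hx (Finset.mem_union_left _ (hf.mem_toFinset.mpr h))
  have hgW : ∀ x ∉ W, (g : L2 V) x = 0 := fun x hx => by
    by_contra h; exact hx (Finset.mem_union_right _ (hg.mem_toFinset.mpr h))
  rw [inner_eq_sum_of_forall_notMem _ _ W fun x hx => .inr (hgW x hx),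
    inner_eq_sum_of_forall_notMem _ _ W fun x hx => .inl (hfW x hx)]
  change ∑ x ∈ W, conj (adjA G hG (f : L2 V) x) * (g : L2 V) x
    = ∑ x ∈ W, conj ((f : L2 V) x) * adjA G hG (g : L2 V) x
  calc ∑ x ∈ W, conj (adjA G hG (f : L2 V) x) * (g : L2 V) x
      = ∑ x ∈ W, ∑ y ∈ W, if G.Adj x y then conj ((f : L2 V) y) * (g : L2 V) x else 0 := by
        refine Finset.sum_congr rfl fun x _ => ?_
        rw [adjA_eq_sum_ite G hG _ x fun y hy _ => hfW y hy, map_sum, Finset.sum_mul]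
        simp only [apply_ite conj, map_zero, ite_mul, zero_mul]
    _ = ∑ y ∈ W, ∑ x ∈ W, if G.Adj y x then conj ((f : L2 V) y) * (g : L2 V) x else 0 := by
        rw [Finset.sum_comm]
        simp only [G.adj_comm]
    _ = ∑ x ∈ W, conj ((f : L2 V) x) * adjA G hG (g : L2 V) x := by
        refine Finset.sum_congr rfl fun y _ => ?_
        rw [adjA_eq_sum_ite G hG _ y fun x hx _ => hgW x hx, Finset.mul_sum]
        simp only [mul_ite, mul_zero]

end AdjacencyOperator

section EdgeChange

variable {V : Type*} (G G' : SimpleGraph V) [DecidableRel G.Adj] [DecidableRel G'.Adj]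

def adjDiff (p : V × V) : ℂ :=
  (if G.Adj p.1 p.2 then 1 else 0) - if G'.Adj p.1 p.2 then 1 else 0

variable {G G'}

lemma norm_adjDiff_le (p : V × V) : ‖adjDiff G G' p‖ ≤ 1 := by
  unfold adjDiff; split_ifs <;> simp

lemma adjDiff_eq_zero {p : V × V} (h : G.Adj p.1 p.2 ↔ G'.Adj p.1 p.2) : adjDiff G G' p = 0 := by
  unfold adjDiff; split_ifs <;> simp_all

lemma adjA_sub_adjA_eq_sum [DecidableEq V] (hG : G.LocallyFinite) (hG' : G'.LocallyFinite)
    {F : Finset (V × V)} (hF : ∀ p, ¬(G.Adj p.1 p.2 ↔ G'.Adj p.1 p.2) → p ∈ F) (f : V → ℂ) (x : V) :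
    adjA G hG f x - adjA G' hG' f x
      = ∑ p ∈ F, if p.1 = x then adjDiff G G' p * f p.2 else 0 := by
  set Z := @SimpleGraph.neighborFinset V G x (hG x) ∪ @SimpleGraph.neighborFinset V G' x (hG' x)
  rw [adjA_eq_sum_ite G hG f x (W := Z) fun y hy h => absurd (Finset.mem_union_left _
      ((@SimpleGraph.mem_neighborFinset V G x (hG x) y).mpr h)) hy,
    adjA_eq_sum_ite G' hG' f x (W := Z) fun y hy h => absurd (Finset.mem_union_right _
      ((@SimpleGraph.mem_neighborFinset V G' x (hG' x) y).mpr h)) hy,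
    ← Finset.sum_sub_distrib]
  have hterm : ∀ y, ((if G.Adj x y then f y else 0) - if G'.Adj x y then f y else 0)
      = adjDiff G G' (x, y) * f y := fun y => by unfold adjDiff; split_ifs <;> simp
  simp only [hterm]
  refine Finset.sum_bij_ne_zero (fun y _ _ => (x, y)) (fun y _ hy => hF _ fun h => ?_)
    (fun _ _ _ _ _ _ h => (Prod.mk.inj h).2) (fun p _ hp => ?_) (fun y _ _ => by simp)
  · exact left_ne_zero_of_mul hy (adjDiff_eq_zero h)
  · obtain ⟨rfl, hne⟩ : p.1 = x ∧ adjDiff G G' p * f p.2 ≠ 0 := by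
      by_contra h; exact hp (by simp_all)
    have hadj : G.Adj p.1 p.2 ∨ G'.Adj p.1 p.2 := by
      by_contra h; exact left_ne_zero_of_mul hne (adjDiff_eq_zero (by tauto))
    refine ⟨p.2, ?_, hne, rfl⟩
    rcases hadj with h | h
    · exact Finset.mem_union_left _ ((@SimpleGraph.mem_neighborFinset V G _ (hG _) _).mpr h)
    · exact Finset.mem_union_right _ ((@SimpleGraph.mem_neighborFinset V G' _ (hG' _) _).mpr h)

end EdgeChange

open Finset in
lemma norm_adjOp_sub_adjOp_le {V : Type*} {G G' : SimpleGraph V} (hG : G.LocallyFinite)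
    (hG' : G'.LocallyFinite) {F : Finset (V × V)}
    (hF : ∀ p, ¬(G.Adj p.1 p.2 ↔ G'.Adj p.1 p.2) → p ∈ F) (f : Cc V) :
    ‖(adjOp G hG).toFun f - (adjOp G' hG').toFun f‖ ≤ #F * ‖f‖ := by
  classical
  have hsum : (adjOp G hG).toFun f - (adjOp G' hG').toFun f
      = ∑ p ∈ F, lp.single 2 p.1 (adjDiff G G' p * (f : L2 V) p.2) := by
    apply lp.ext
    funext x
    rw [lp.coeFn_sum, Finset.sum_apply]
    change adjA G hG (f : L2 V) x - adjA G' hG' (f : L2 V) x = _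
    rw [adjA_sub_adjA_eq_sum hG hG' hF]
    simp [lp.single_apply, Pi.single_apply, eq_comm]
  rw [hsum]
  calc ‖∑ p ∈ F, (lp.single 2 p.1 (adjDiff G G' p * (f : L2 V) p.2) : L2 V)‖
      ≤ ∑ p ∈ F, ‖(lp.single 2 p.1 (adjDiff G G' p * (f : L2 V) p.2) : L2 V)‖ :=
        norm_sum_le _ _
    _ ≤ ∑ _p ∈ F, ‖f‖ := sum_le_sum fun p _ => by
        rw [lp.norm_single (by norm_num), norm_mul]
        exact (mul_le_of_le_one_left (norm_nonneg _) (norm_adjDiff_le p)).trans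
          (lp.norm_apply_le_norm (by norm_num) _ _)
    _ = #F * ‖f‖ := by rw [sum_const, nsmul_eq_mul]

theorem deficiency_stable_under_finite_edge_change_general {V : Type}
    (G G' : SimpleGraph V) (hG : G.LocallyFinite) (hG' : G'.LocallyFinite)
    (hfin : {p : V × V | ¬ (G.Adj p.1 p.2 ↔ G'.Adj p.1 p.2)}.Finite) :
    etaP (adjOp G hG) = etaP (adjOp G' hG') ∧
    etaM (adjOp G hG) = etaM (adjOp G' hG') := by
  have hdiff (f : Cc V) :
      ‖(adjOp G hG).toFun f - (adjOp G' hG').toFun f‖ ≤ hfin.toFinset.card * ‖f‖ :=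
    norm_adjOp_sub_adjOp_le hG hG' (fun p hp => hfin.mem_toFinset.mpr hp) f
  have hrank (z : ℂ) (hz : z.im ≠ 0) : Module.rank ℂ (defSubspace (adjOp G hG) z)
      = Module.rank ℂ (defSubspace (adjOp G' hG') z) := by
    rw [rank_defSubspace (adjOp G hG) dense_Cc, rank_defSubspace (adjOp G' hG') dense_Cc]
    exact defectRank_eq_of_norm_sub_le (adjOp_isSymm G hG) (adjOp_isSymm G' hG')
      (Nat.cast_nonneg _) hdiff (by simpa using hz)
  exact ⟨hrank Complex.I (by simp), hrank (-Complex.I) (by simp)⟩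

/-- Two locally finite graphs on the same vertex set whose edge relations
differ on only finitely many pairs of vertices have adjacency operators with the same
deficiency indices. -/
theorem deficiency_stable_under_finite_edge_change {V : Type} [Countable V]
    (G G' : SimpleGraph V) (hG : G.LocallyFinite) (hG' : G'.LocallyFinite)
    (hfin : {p : V × V | ¬ (G.Adj p.1 p.2 ↔ G'.Adj p.1 p.2)}.Finite) :
    etaP (adjOp G hG) = etaP (adjOp G' hG') ∧
    etaM (adjOp G hG) = etaM (adjOp G' hG') :=
  deficiency_stable_under_finite_edge_change_general G G' hG hG' hfin

end DefIdx
end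
end

section
/- Let G be a locally finite antitree with root v, spheres S_n of finite size s_n, and |x| := dist(v,x). Let P : ℓ²(V) → ℓ²(V) be the sphere-averaging operator (Pf)(x) = (1/s_{|x|}) Σ_{y ∈ S_{|x|}} f(y). Then P is the orthogonal projection onto the closed subspace of radially symmetric ℓ² functions (those constant on each sphere), and for every finitely supported f one has A_G f = P A_G P f; moreover A_G P f is radially symmetric with constant value s_{n−1} c_{n−1} + s_{n+1} c_{n+1} on the sphere S_n, where c_k denotes the constant value of Pf on S_k and s_{−1} := 0. -/
noncomputable section

open scoped ComplexConjugate

namespace DefIdx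

/-! In an antitree the root is adjacent exactly to `S₁`, and a vertex of `Sₙ`, `n ≥ 1`, exactly
to `Sₙ₋₁ ∪ Sₙ₊₁`, so `(A f)(x)` only depends on the sums of `f` over the spheres next to `x`.
These sums are unchanged by averaging, so `A f = A P f`, and `A f` is radially symmetric, so `P`
fixes it. That `P` is the orthogonal projection onto radial functions is checked by splitting the
`ℓ²` sums along the finite spheres: on each of them `P` replaces `f` by its mean, which by
Cauchy–Schwarz does not increase the `ℓ²` mass. -/

lemma isClosed_setOf_radSymm {V : Type*} (G : SimpleGraph V) (v : V) :
    IsClosed {f : L2 V | RadSymm G v f} := by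
  simp only [RadSymm, Set.ofPred_forall]
  exact isClosed_iInter fun x => isClosed_iInter fun y => isClosed_iInter fun _ =>
    isClosed_eq (lp.evalCLM ℂ (fun _ => ℂ) 2 x).continuous
      (lp.evalCLM ℂ (fun _ => ℂ) 2 y).continuous

section SphereAveraging

variable {V : Type*} {G : SimpleGraph V} {v : V} (hfin : ∀ n, (sphere G v n).Finite)

lemma mem_toFinset_sphere {x : V} {n : ℕ} : x ∈ (hfin n).toFinset ↔ G.dist v x = n :=
  Set.Finite.mem_toFinset _

lemma ncard_sphere_eq_card (n : ℕ) : (sphere G v n).ncard = (hfin n).toFinset.card :=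
  Set.ncard_eq_toFinset_card _ (hfin n)

lemma sum_sphere_eq_ncard_mul_sphAvg (f : V → ℂ) (n : ℕ) :
    ∑ y ∈ (hfin n).toFinset, f y = (sphere G v n).ncard * sphAvg G v hfin f n := by
  rw [sphAvg, ncard_sphere_eq_card hfin]
  rcases (hfin n).toFinset.eq_empty_or_nonempty with h | h
  · simp [h]
  · have : ((hfin n).toFinset.card : ℂ) ≠ 0 := by exact_mod_cast h.card_pos.ne'
    field_simp

lemma sphP_apply_of_dist_eq (f : V → ℂ) {y : V} {n : ℕ} (hy : G.dist v y = n) :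
    sphP G v hfin f y = sphAvg G v hfin f n := by
  rw [sphP, hy]

lemma sum_sphere_sphP (f : V → ℂ) (n : ℕ) :
    ∑ y ∈ (hfin n).toFinset, sphP G v hfin f y = ∑ y ∈ (hfin n).toFinset, f y := by
  rw [Finset.sum_congr rfl fun y hy =>
      sphP_apply_of_dist_eq hfin f ((mem_toFinset_sphere hfin).1 hy),
    Finset.sum_const, nsmul_eq_mul, ← ncard_sphere_eq_card, sum_sphere_eq_ncard_mul_sphAvg]

lemma sphAvg_eq_of_forall_dist_eq {f : V → ℂ} {n : ℕ} {c : ℂ}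
    (hc : ∀ y, G.dist v y = n → f y = c) {x : V} (hx : G.dist v x = n) :
    sphAvg G v hfin f n = c := by
  have hs : ((sphere G v n).ncard : ℂ) ≠ 0 := by
    rw [ncard_sphere_eq_card hfin]
    exact_mod_cast Finset.card_ne_zero_of_mem ((mem_toFinset_sphere hfin).2 hx)
  refine mul_left_cancel₀ hs ?_
  rw [← sum_sphere_eq_ncard_mul_sphAvg, Finset.sum_congr rfl fun y hy =>
      hc y ((mem_toFinset_sphere hfin).1 hy),
    Finset.sum_const, nsmul_eq_mul, ncard_sphere_eq_card hfin]

lemma radSymm_sphP (f : V → ℂ) : RadSymm G v (sphP G v hfin f) :=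
  fun x y h => by simp only [sphP, h]

lemma sphP_eq_self_iff {f : V → ℂ} : sphP G v hfin f = f ↔ RadSymm G v f := by
  refine ⟨fun h => h ▸ radSymm_sphP hfin f, fun h => funext fun x => ?_⟩
  exact sphAvg_eq_of_forall_dist_eq hfin (fun y hy => h y x hy) rfl

lemma sphP_sphP (f : V → ℂ) : sphP G v hfin (sphP G v hfin f) = sphP G v hfin f :=
  (sphP_eq_self_iff hfin).2 (radSymm_sphP hfin f)

lemma tsum_subtype_dist_eq {M : Type*} [AddCommMonoid M] [TopologicalSpace M] (u : V → M)
    (n : ℕ) : ∑' x : {x : V // G.dist v x = n}, u x = ∑ y ∈ (hfin n).toFinset, u y := by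
  rw [← Finset.tsum_subtype,
    ← (Equiv.subtypeEquivRight fun _ => mem_toFinset_sphere hfin).tsum_eq]
  rfl

lemma summable_iff_summable_sum_sphere {u : V → ℝ} (hu : 0 ≤ u) :
    Summable u ↔ Summable fun n => ∑ y ∈ (hfin n).toFinset, u y := by
  have : ∀ n, Finite {x : V // G.dist v x = n} := fun n => (hfin n).to_subtype
  rw [← (Equiv.sigmaFiberEquiv (G.dist v)).summable_iff,
    summable_sigma_of_nonneg (f := u ∘ _) fun _ => hu _]
  simp only [Function.comp_apply, Equiv.sigmaFiberEquiv_apply, tsum_subtype_dist_eq hfin u,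
    Summable.of_finite, implies_true, true_and]

lemma tsum_eq_tsum_sum_sphere {w : V → ℂ} (hw : Summable w) :
    ∑' x, w x = ∑' n, ∑ y ∈ (hfin n).toFinset, w y := by
  rw [← (hw.hasSum.tsum_fiberwise (G.dist v)).tsum_eq]
  exact tsum_congr (tsum_subtype_dist_eq hfin w)

lemma sum_sphere_norm_sphP_sq_le (f : V → ℂ) (n : ℕ) :
    ∑ y ∈ (hfin n).toFinset, ‖sphP G v hfin f y‖ ^ 2 ≤
      ∑ y ∈ (hfin n).toFinset, ‖f y‖ ^ 2 := by
  set s := (hfin n).toFinset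
  rcases s.eq_empty_or_nonempty with h | h
  · simp [h]
  have hs : (s.card : ℝ) ≠ 0 := by exact_mod_cast h.card_pos.ne'
  have hP : ∀ y ∈ s, ‖sphP G v hfin f y‖ = ‖∑ z ∈ s, f z‖ / s.card := fun y hy => by
    rw [sphP_apply_of_dist_eq hfin f ((mem_toFinset_sphere hfin).1 hy), sphAvg,
      ncard_sphere_eq_card hfin, norm_mul, norm_div, norm_one, Complex.norm_natCast]
    ring
  calc ∑ y ∈ s, ‖sphP G v hfin f y‖ ^ 2 = ‖∑ z ∈ s, f z‖ ^ 2 / s.card := by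
        rw [Finset.sum_congr rfl fun y hy => by rw [hP y hy], Finset.sum_const, nsmul_eq_mul]
        field_simp
    _ ≤ (∑ z ∈ s, ‖f z‖) ^ 2 / s.card := by gcongr; exact norm_sum_le _ _
    _ ≤ ∑ z ∈ s, ‖f z‖ ^ 2 := by
        simpa using pow_sum_div_card_le_sum_pow (s := s) (fun _ _ => norm_nonneg (f _)) 1

lemma memℓp_sphP {f : V → ℂ} (hf : Memℓp f 2) : Memℓp (sphP G v hfin f) 2 := by
  have h2 : (0 : ℝ) < (2 : ENNReal).toReal := by norm_num
  rw [memℓp_gen_iff h2] at hf ⊢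
  simp only [ENNReal.toReal_ofNat, Real.rpow_two] at hf ⊢
  rw [summable_iff_summable_sum_sphere hfin fun _ => by positivity] at hf ⊢
  exact hf.of_nonneg_of_le (fun _ => Finset.sum_nonneg fun _ _ => by positivity)
    (sum_sphere_norm_sphP_sq_le hfin f)

lemma sum_sphere_conj_sphP_mul (f g : V → ℂ) (n : ℕ) :
    ∑ y ∈ (hfin n).toFinset, conj (sphP G v hfin f y) * g y =
      (sphere G v n).ncard * (conj (sphAvg G v hfin f n) * sphAvg G v hfin g n) := by
  rw [Finset.sum_congr rfl fun y hy => by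
      rw [sphP_apply_of_dist_eq hfin f ((mem_toFinset_sphere hfin).1 hy)],
    ← Finset.mul_sum, sum_sphere_eq_ncard_mul_sphAvg]
  ring

lemma sum_sphere_conj_mul_sphP (f g : V → ℂ) (n : ℕ) :
    ∑ y ∈ (hfin n).toFinset, conj (f y) * sphP G v hfin g y =
      (sphere G v n).ncard * (conj (sphAvg G v hfin f n) * sphAvg G v hfin g n) := by
  rw [Finset.sum_congr rfl fun y hy => by
      rw [sphP_apply_of_dist_eq hfin g ((mem_toFinset_sphere hfin).1 hy)],
    ← Finset.sum_mul, ← map_sum, sum_sphere_eq_ncard_mul_sphAvg, map_mul, map_natCast]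
  ring

lemma inner_sphP_left_eq_inner_sphP_right {f g : L2 V} (hPf : Memℓp (sphP G v hfin f) 2)
    (hPg : Memℓp (sphP G v hfin g) 2) :
    inner ℂ (⟨sphP G v hfin f, hPf⟩ : L2 V) g =
      inner ℂ f (⟨sphP G v hfin g, hPg⟩ : L2 V) := by
  rw [lp.inner_eq_tsum, lp.inner_eq_tsum,
    tsum_eq_tsum_sum_sphere hfin (lp.summable_inner (⟨sphP G v hfin f, hPf⟩ : L2 V) g),
    tsum_eq_tsum_sum_sphere hfin (lp.summable_inner f (⟨sphP G v hfin g, hPg⟩ : L2 V))]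
  refine tsum_congr fun n => ?_
  simp only [RCLike.inner_apply']
  exact (sum_sphere_conj_sphP_mul hfin f g n).trans (sum_sphere_conj_mul_sphP hfin f g n).symm

end SphereAveraging

section Antitree

variable {V : Type*} {G : SimpleGraph V} {v : V} (hG : G.LocallyFinite)

lemma adjA_eq_sum_sphere (hfin : ∀ n, (sphere G v n).Finite) (hAT : IsAntitree G v)
    (f : V → ℂ) (x : V) :
    adjA G hG f x =
      (if G.dist v x = 0 then 0 else ∑ y ∈ (hfin (G.dist v x - 1)).toFinset, f y) +
        ∑ y ∈ (hfin (G.dist v x + 1)).toFinset, f y := by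
  classical
  rcases eq_or_ne x v with rfl | hx
  · rw [SimpleGraph.dist_self, if_pos rfl, zero_add, adjA]
    refine Finset.sum_congr (Finset.ext fun y => ?_) fun _ _ => rfl
    rw [SimpleGraph.mem_neighborFinset, mem_toFinset_sphere hfin,
      SimpleGraph.dist_eq_one_iff_adj]
  · have hne : G.dist v x ≠ 0 := fun h => hx (hAT.1.dist_eq_zero_iff.mp h).symm
    have hN : @SimpleGraph.neighborFinset V G x (hG x) =
        (hfin (G.dist v x - 1)).toFinset ∪ (hfin (G.dist v x + 1)).toFinset := by
      ext y
      rw [SimpleGraph.mem_neighborFinset, ← SimpleGraph.mem_neighborSet, hAT.2 x hx,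
        Finset.mem_union, mem_toFinset_sphere hfin, mem_toFinset_sphere hfin]
      rfl
    have hdisj : Disjoint (hfin (G.dist v x - 1)).toFinset (hfin (G.dist v x + 1)).toFinset :=
      Finset.disjoint_left.2 fun y h₁ h₂ => by
        rw [mem_toFinset_sphere hfin] at h₁ h₂
        omega
    rw [if_neg hne, adjA, hN, Finset.sum_union hdisj]

lemma adjA_sphP (hfin : ∀ n, (sphere G v n).Finite) (hAT : IsAntitree G v) (f : V → ℂ) :
    adjA G hG (sphP G v hfin f) = adjA G hG f := by
  funext x
  simp only [adjA_eq_sum_sphere hG hfin hAT, sum_sphere_sphP]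

lemma radSymm_adjA (hfin : ∀ n, (sphere G v n).Finite) (hAT : IsAntitree G v) (f : V → ℂ) :
    RadSymm G v (adjA G hG f) := fun x y h => by
  simp only [adjA_eq_sum_sphere hG hfin hAT, h]

lemma adjA_sphP_apply (hfin : ∀ n, (sphere G v n).Finite) (hAT : IsAntitree G v)
    (f : V → ℂ) (x : V) :
    adjA G hG (sphP G v hfin f) x =
      (if G.dist v x = 0 then 0
        else ((sphere G v (G.dist v x - 1)).ncard : ℂ) * sphAvg G v hfin f (G.dist v x - 1)) +
      ((sphere G v (G.dist v x + 1)).ncard : ℂ) * sphAvg G v hfin f (G.dist v x + 1) := by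
  rw [adjA_sphP hG hfin hAT]
  simp only [adjA_eq_sum_sphere hG hfin hAT, sum_sphere_eq_ncard_mul_sphAvg]

end Antitree

theorem antitree_sphere_projection_general {V : Type}
    (G : SimpleGraph V) (hG : G.LocallyFinite) (v : V) (hAT : IsAntitree G v)
    (hfin : ∀ n, (sphere G v n).Finite) :
    (∀ f : L2 V, Memℓp (sphP G v hfin ↑f) 2) ∧
    (∀ f : V → ℂ, sphP G v hfin (sphP G v hfin f) = sphP G v hfin f) ∧
    (∀ (f g : L2 V) (hPf : Memℓp (sphP G v hfin ↑f) 2)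
        (hPg : Memℓp (sphP G v hfin ↑g) 2),
      (inner ℂ (⟨sphP G v hfin ↑f, hPf⟩ : L2 V) g : ℂ) =
        inner ℂ f (⟨sphP G v hfin ↑g, hPg⟩ : L2 V)) ∧
    (∀ f : L2 V, sphP G v hfin ↑f = ↑f ↔ RadSymm G v ↑f) ∧
    IsClosed {f : L2 V | RadSymm G v ↑f} ∧
    (∀ f : V → ℂ, {x | f x ≠ 0}.Finite →
      adjA G hG f = sphP G v hfin (adjA G hG (sphP G v hfin f))) ∧
    (∀ f : V → ℂ, {x | f x ≠ 0}.Finite → RadSymm G v (adjA G hG (sphP G v hfin f)) ∧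
      ∀ x : V,
        adjA G hG (sphP G v hfin f) x =
          (if G.dist v x = 0 then 0
            else ((sphere G v (G.dist v x - 1)).ncard : ℂ) *
              sphAvg G v hfin f (G.dist v x - 1)) +
          ((sphere G v (G.dist v x + 1)).ncard : ℂ) *
            sphAvg G v hfin f (G.dist v x + 1)) := by
  have hA : ∀ f, adjA G hG (sphP G v hfin f) = adjA G hG f := adjA_sphP hG hfin hAT
  have hAf_radial : ∀ f, RadSymm G v (adjA G hG f) := radSymm_adjA hG hfin hAT
  refine ⟨fun f => memℓp_sphP hfin f.2, sphP_sphP hfin,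
    fun f g hPf hPg => inner_sphP_left_eq_inner_sphP_right hfin hPf hPg,
    fun f => sphP_eq_self_iff hfin, isClosed_setOf_radSymm G v,
    fun f _ => ?_, fun f _ => ⟨hA f ▸ hAf_radial f, adjA_sphP_apply hG hfin hAT f⟩⟩
  rw [hA, (sphP_eq_self_iff hfin).2 (hAf_radial f)]

/-- For a locally finite antitree, the sphere-averaging map `P` is the
orthogonal projection onto the (closed) subspace of radially symmetric `ℓ²` functions
(`P` maps `ℓ²` into `ℓ²`, is idempotent, symmetric, and its fixed points are exactly the
radially symmetric functions); moreover `A_G = P A_G P` on finitely supported functions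
and `A_G P f` is radially symmetric with constant value
`s_{n-1} c_{n-1} + s_{n+1} c_{n+1}` on the sphere `S_n` (with `s_{-1} = 0`). -/
theorem antitree_sphere_projection {V : Type} [Countable V]
    (G : SimpleGraph V) (hG : G.LocallyFinite) (v : V) (hAT : IsAntitree G v)
    (hfin : ∀ n, (sphere G v n).Finite) :
    (∀ f : L2 V, Memℓp (sphP G v hfin ↑f) 2) ∧
    (∀ f : V → ℂ, sphP G v hfin (sphP G v hfin f) = sphP G v hfin f) ∧
    (∀ (f g : L2 V) (hPf : Memℓp (sphP G v hfin ↑f) 2)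
        (hPg : Memℓp (sphP G v hfin ↑g) 2),
      (inner ℂ (⟨sphP G v hfin ↑f, hPf⟩ : L2 V) g : ℂ) =
        inner ℂ f (⟨sphP G v hfin ↑g, hPg⟩ : L2 V)) ∧
    (∀ f : L2 V, sphP G v hfin ↑f = ↑f ↔ RadSymm G v ↑f) ∧
    IsClosed {f : L2 V | RadSymm G v ↑f} ∧
    (∀ f : V → ℂ, {x | f x ≠ 0}.Finite →
      adjA G hG f = sphP G v hfin (adjA G hG (sphP G v hfin f))) ∧
    (∀ f : V → ℂ, {x | f x ≠ 0}.Finite → RadSymm G v (adjA G hG (sphP G v hfin f)) ∧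
      ∀ x : V,
        adjA G hG (sphP G v hfin f) x =
          (if G.dist v x = 0 then 0
            else ((sphere G v (G.dist v x - 1)).ncard : ℂ) *
              sphAvg G v hfin f (G.dist v x - 1)) +
          ((sphere G v (G.dist v x + 1)).ncard : ℂ) *
            sphAvg G v hfin f (G.dist v x + 1)) :=
  antitree_sphere_projection_general G hG v hAT hfin

end DefIdx
end
end
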